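/- Let G = (V, E) be a graph with |V| = n that admits a nice tree decomposition of width τ with N nodes. Then there exist a polytope P = {x ∈ ℝ^m : Ax ≤ b, Cx = d}, where m and the total number of rows of A and C are at most c·2^(τ+1)·N for an absolute constant c, and a linear map π : ℝ^m → ℝ^V, such that π(P) equals the independent set polytope of G, i.e., the convex hull of the characteristic vectors χ_S ∈ {0,1}^V of all independent sets S of G. -/

import Mathlib

/-! Common definitions: CSP instances, configurations, nice tree decompositions,
and the polytopes from Kolman–Koutecký. -/

/-- A constraint with scope `scope`; its satisfaction depends only on the
coordinates in the scope (it is a relation on the domains of the scope). -/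
structure CSPConstraint (n : ℕ) where
  scope : Finset (Fin n)
  sat : (Fin n → ℝ) → Prop
  sat_congr : ∀ z z' : Fin n → ℝ, (∀ v ∈ scope, z v = z' v) → sat z → sat z'

/-- A CSP instance: finite real domains, hard constraints and soft constraints. -/
structure CSPInstance (n : ℕ) where
  dom : Fin n → Finset ℝ
  hard : List (CSPConstraint n)
  soft : List (CSPConstraint n)

variable {n : ℕ}

/-- The list of all constraints (hard and soft). -/
def consList (Q : CSPInstance n) : List (CSPConstraint n) := Q.hard ++ Q.soft

/-- A feasible assignment: values in the domains, satisfying all hard constraints. -/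
def Feasible (Q : CSPInstance n) (z : Fin n → ℝ) : Prop :=
  (∀ v, z v ∈ Q.dom v) ∧ ∀ C ∈ Q.hard, C.sat z

-- Configurations of a set `W` of variables: partial assignments (with `none`
-- playing the role of the symbol `λ`) defined exactly on `W`.
open Classical in
noncomputable def configs (Q : CSPInstance n) (W : Finset (Fin n)) :
    Finset (Fin n → Option ℝ) :=
  (Fintype.piFinset fun v =>
      if v ∈ W then (Q.dom v).image some else ({none} : Finset (Option ℝ))).filter
    (fun K => ∀ C ∈ Q.hard, C.scope ⊆ W → C.sat (fun v => (K v).getD 0))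

/-- Restriction `K↾_W` of a configuration: coordinates outside `W` are set to `λ`. -/
def restrictCfg (K : Fin n → Option ℝ) (W : Finset (Fin n)) : Fin n → Option ℝ :=
  fun v => if v ∈ W then K v else none

/-- A (rooted) nice tree: leaves, introduce nodes, forget nodes and join nodes. -/
inductive NiceTree (n : ℕ) : Type
  | leaf (v : Fin n) : NiceTree n
  | introduce (v : Fin n) (t : NiceTree n) : NiceTree n
  | forget (v : Fin n) (t : NiceTree n) : NiceTree n
  | join (t₁ t₂ : NiceTree n) : NiceTree n

namespace NiceTree

/-- The bag of the root node of a nice tree. -/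
def bag : NiceTree n → Finset (Fin n)
  | leaf v => {v}
  | introduce v t => insert v (bag t)
  | forget v t => (bag t).erase v
  | join t₁ _ => bag t₁

/-- All vertices appearing in bags of the tree. -/
def verts : NiceTree n → Finset (Fin n)
  | leaf v => {v}
  | introduce v t => insert v (verts t)
  | forget _ t => verts t
  | join t₁ t₂ => verts t₁ ∪ verts t₂

/-- Number of nodes of the tree. -/
def size : NiceTree n → ℕ
  | leaf _ => 1
  | introduce _ t => size t + 1
  | forget _ t => size t + 1
  | join t₁ t₂ => size t₁ + size t₂ + 1

/-- Structural validity of a nice tree (in particular, the connectivity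
condition of tree decompositions: an introduced vertex does not occur below,
and vertices shared by the two subtrees of a join lie in its bag). -/
def valid : NiceTree n → Prop
  | leaf _ => True
  | introduce v t => v ∉ verts t ∧ valid t
  | forget v t => v ∈ bag t ∧ valid t
  | join t₁ t₂ => bag t₁ = bag t₂ ∧ verts t₁ ∩ verts t₂ ⊆ bag t₁ ∧ valid t₁ ∧ valid t₂

/-- `isSubtree s t`: `s` is a node (subtree) of `t`. -/
def isSubtree (s : NiceTree n) : NiceTree n → Prop
  | leaf v => s = leaf v
  | introduce v t => s = introduce v t ∨ isSubtree s t
  | forget v t => s = forget v t ∨ isSubtree s t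
  | join t₁ t₂ => s = join t₁ t₂ ∨ isSubtree s t₁ ∨ isSubtree s t₂

-- The configurations relevant to the subtree: `ℛ(a) = ⋃_{b ∈ T(a)} 𝒦(B(b))`.
open Classical in
noncomputable def relConfigs (Q : CSPInstance n) : NiceTree n → Finset (Fin n → Option ℝ)
  | leaf v => configs Q {v}
  | introduce v t => configs Q (insert v (bag t)) ∪ relConfigs Q t
  | forget v t => configs Q ((bag t).erase v) ∪ relConfigs Q t
  | join t₁ t₂ => relConfigs Q t₁ ∪ relConfigs Q t₂

end NiceTree

/-- A valid nice tree decomposition for the CSP instance `Q`: every variable is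
in some bag and every constraint scope is contained in some bag. -/
def IsNiceTreeDecompCSP (Q : CSPInstance n) (T : NiceTree n) : Prop :=
  T.valid ∧ (∀ v : Fin n, v ∈ T.verts) ∧
    ∀ C ∈ consList Q, ∃ s : NiceTree n, s.isSubtree T ∧ C.scope ⊆ s.bag

/-- A valid nice tree decomposition of a graph `G`: every vertex is in some bag
and both endpoints of every edge lie in a common bag. -/
def IsNiceTreeDecompGraph (G : SimpleGraph (Fin n)) (T : NiceTree n) : Prop :=
  T.valid ∧ (∀ v : Fin n, v ∈ T.verts) ∧
    ∀ u v : Fin n, G.Adj u v → ∃ s : NiceTree n, s.isSubtree T ∧ u ∈ s.bag ∧ v ∈ s.bag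

/-- The constraint graph of a CSP instance. -/
def constraintGraph (Q : CSPInstance n) : SimpleGraph (Fin n) where
  Adj u v := u ≠ v ∧ ∃ C ∈ consList Q, u ∈ C.scope ∧ v ∈ C.scope
  symm := by
    constructor
    rintro u v ⟨hne, C, hC, hu, hv⟩
    exact ⟨hne.symm, C, hC, hv, hu⟩
  loopless := by
    constructor
    rintro v ⟨hne, -⟩
    exact hne rfl

-- The LP constraints of `P(Q)` relevant to the subtree `t`: bag equations and
-- consistency equations at introduce and forget nodes of `t`.
def RelCons (Q : CSPInstance n) (f : (Fin n → Option ℝ) → ℝ) : NiceTree n → Prop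
  | .leaf v => ∑ K ∈ configs Q {v}, f K = 1
  | .introduce v t =>
      RelCons Q f t ∧ (∑ K ∈ configs Q (insert v t.bag), f K = 1) ∧
      ∀ K ∈ configs Q t.bag,
        ∑ K' ∈ (configs Q (insert v t.bag)).filter
            (fun K' => restrictCfg K' t.bag = K), f K' = f K
  | .forget v t =>
      RelCons Q f t ∧ (∑ K ∈ configs Q (t.bag.erase v), f K = 1) ∧
      ∀ K ∈ configs Q (t.bag.erase v),
        ∑ K' ∈ (configs Q t.bag).filter
            (fun K' => restrictCfg K' (t.bag.erase v) = K), f K' = f K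
  | .join t₁ t₂ => RelCons Q f t₁ ∧ RelCons Q f t₂

/-- All the constraints of `P(Q)` relevant to the subtree `t`, including the
bounds `0 ≤ f(K) ≤ 1` for relevant configurations. -/
def RelevantLP (Q : CSPInstance n) (t : NiceTree n) (f : (Fin n → Option ℝ) → ℝ) : Prop :=
  RelCons Q f t ∧ ∀ K ∈ t.relConfigs Q, 0 ≤ f K ∧ f K ≤ 1

/-- The polytope `P(Q) ⊆ ℝ^{𝒦_ℬ}` (coordinates outside `𝒦_ℬ` are zero). -/
def Ppoly (Q : CSPInstance n) (T : NiceTree n) : Set ((Fin n → Option ℝ) → ℝ) :=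
  {f | RelevantLP Q T f ∧ ∀ K, K ∉ T.relConfigs Q → f K = 0}

/-- Extended feasible assignments `(z, h)`. -/
def ExtAssignments (Q : CSPInstance n) :
    Set ((Fin n → ℝ) × (Fin Q.soft.length → ℝ)) :=
  {p | Feasible Q p.1 ∧ ∀ i : Fin Q.soft.length,
      ((Q.soft.get i).sat p.1 ∧ p.2 i = 1) ∨ (¬ (Q.soft.get i).sat p.1 ∧ p.2 i = 0)}

/-- `CSP(Q)`: the convex hull of all extended feasible assignments. -/
def CSPpolytope (Q : CSPInstance n) : Set ((Fin n → ℝ) × (Fin Q.soft.length → ℝ)) :=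
  convexHull ℝ (ExtAssignments Q)

/-- `CSP'(Q)`: the convex hull of all feasible assignments. -/
def CSPpolytope' (Q : CSPInstance n) : Set (Fin n → ℝ) :=
  convexHull ℝ {z | Feasible Q z}

/-- The `y`-variables of the basic LP: one for each `v ∈ V` and `i ∈ D_v`. -/
abbrev YType (Q : CSPInstance n) := (v : Fin n) → {i : ℝ // i ∈ Q.dom v} → ℝ

/-- The `g`-variables of the basic LP: one for each constraint `C_U ∈ 𝒞 ∪ ℋ`
and each configuration `K ∈ 𝒦(U)`. -/
abbrev GType (Q : CSPInstance n) :=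
  (c : Fin (consList Q).length) →
    {K : Fin n → Option ℝ // K ∈ configs Q ((consList Q).get c).scope} → ℝ

/-- The basic LP (1)–(3). -/
def BasicLP (Q : CSPInstance n) (p : YType Q × GType Q) : Prop :=
  (∀ v : Fin n, ∑ i ∈ (Q.dom v).attach, p.1 v i = 1) ∧
  (∀ c : Fin (consList Q).length, ∀ v ∈ ((consList Q).get c).scope,
    ∀ (i : ℝ) (hi : i ∈ Q.dom v),
      ∑ K ∈ (configs Q ((consList Q).get c).scope).attach.filter
          (fun K => K.1 v = some i), p.2 c K = p.1 v ⟨i, hi⟩) ∧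
  (∀ v i, 0 ≤ p.1 v i ∧ p.1 v i ≤ 1) ∧ (∀ c K, 0 ≤ p.2 c K ∧ p.2 c K ≤ 1)

/-- Integrality (all coordinates in `{0,1}`) of a `(y, g)` vector. -/
def IntegralYG (Q : CSPInstance n) (p : YType Q × GType Q) : Prop :=
  (∀ v i, p.1 v i = 0 ∨ p.1 v i = 1) ∧ ∀ c K, p.2 c K = 0 ∨ p.2 c K = 1

-- The map sending a (feasible) assignment `z` to the `(y, g)` vector of the basic LP.
open Classical in
noncomputable def exMap (Q : CSPInstance n) (z : Fin n → ℝ) : YType Q × GType Q :=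
  (fun v i => if z v = i.1 then 1 else 0,
   fun c K => if ∀ u ∈ ((consList Q).get c).scope, K.1 u = some (z u) then 1 else 0)

/-!
A point of the LP assigns to every bag `W` a probability distribution `f W` on the independent
subsets of `W`, such that along every tree edge the distribution on the larger bag has the one
on the smaller bag as its marginal. Such locally consistent distributions glue, bottom-up along
the tree, into a single distribution on subsets of `V` whose marginals are the `f W`: at introduce
and join nodes the two pieces overlap exactly in a bag (this is the connectivity condition of tree
decompositions), and they are glued conditionally independently given their common marginal
there. Since every edge of `G` lies in some bag, the glued distribution lives on independent sets,
so the projection of the LP point is a convex combination of their characteristic vectors.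
Conversely `χ_S` is the projection of the integral point `f W = δ_{S ∩ W}`. There is one variable
per bag and independent subset of it, and one equation per bag and per tree edge and subset of
its smaller bag, which gives the size `O(2^(τ+1) N)`.
-/

open Finset

section Pushforward

variable {β γ : Type*} [Fintype β] [DecidableEq γ]

def pushforward (φ : β → γ) (w : β → ℝ) (c : γ) : ℝ := ∑ b with φ b = c, w b

variable {φ : β → γ} {w : β → ℝ}

lemma sum_pushforward [Fintype γ] : ∑ c, pushforward φ w c = ∑ b, w b :=
  sum_fiberwise univ φ w

lemma sum_filter_pushforward [Fintype γ] (p : γ → Prop) [DecidablePred p] :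
    ∑ c with p c, pushforward φ w c = ∑ b with p (φ b), w b := by
  simp only [pushforward]
  rw [← sum_fiberwise_of_maps_to (g := φ) (t := {c | p c}) (by simp)]
  refine sum_congr rfl fun c hc => ?_
  rw [filter_filter]
  refine sum_congr (filter_congr fun b _ => ?_) fun _ _ => rfl
  grind

lemma pushforward_pushforward {δ : Type*} [Fintype γ] [DecidableEq δ] (ψ : γ → δ) :
    pushforward ψ (pushforward φ w) = pushforward (ψ ∘ φ) w :=
  funext fun d => sum_filter_pushforward (ψ · = d)

lemma pushforward_congr {φ' : β → γ} (h : ∀ b, w b ≠ 0 → φ b = φ' b) :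
    pushforward φ w = pushforward φ' w := by
  ext c
  simp only [pushforward, sum_filter]
  refine sum_congr rfl fun b _ => ?_
  by_cases hb : w b = 0
  · simp [hb]
  · rw [h b hb]

lemma pushforward_nonneg (hw : 0 ≤ w) : 0 ≤ pushforward φ w :=
  fun _ => sum_nonneg fun b _ => hw b

lemma le_pushforward (hw : 0 ≤ w) (b : β) : w b ≤ pushforward φ w (φ b) :=
  single_le_sum (fun b _ => hw b) (by simp)

lemma pushforward_ne_zero (hw : 0 ≤ w) {b : β} (hb : w b ≠ 0) : pushforward φ w (φ b) ≠ 0 :=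
  ((hw b).lt_of_ne' hb |>.trans_le (le_pushforward hw b)).ne'

lemma exists_of_pushforward_ne_zero {c : γ} (h : pushforward φ w c ≠ 0) :
    ∃ b, φ b = c ∧ w b ≠ 0 := by
  obtain ⟨b, hb, hwb⟩ := exists_ne_zero_of_sum_ne_zero h
  exact ⟨b, (mem_filter.1 hb).2, hwb⟩

lemma pushforward_single [DecidableEq β] (b : β) :
    pushforward φ (Pi.single b 1) = Pi.single (φ b) 1 := by
  ext c
  simp [pushforward, Pi.single_apply, eq_comm]

omit [DecidableEq γ] in
lemma pushforward_id [DecidableEq β] (w : β → ℝ) : pushforward id w = w := by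
  ext b
  simp [pushforward, filter_eq']

omit [DecidableEq γ] in
lemma pushforward_fst [DecidableEq β] [Fintype γ] (w : β × γ → ℝ) (b : β) :
    pushforward Prod.fst w b = ∑ c, w (b, c) := by
  rw [pushforward, sum_filter, Fintype.sum_prod_type,
    sum_eq_single b (fun x _ hx => by simp [hx]) (by simp)]
  simp

lemma pushforward_snd [DecidableEq β] [Fintype γ] (w : β × γ → ℝ) (c : γ) :
    pushforward Prod.snd w c = ∑ b, w (b, c) := by
  rw [pushforward, sum_filter, Fintype.sum_prod_type_right,
    sum_eq_single c (fun x _ hx => by simp [hx]) (by simp)]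
  simp

end Pushforward

section Marginal

variable {α : Type*} [Fintype α] [DecidableEq α]

def marginal (w : Finset α → ℝ) (W : Finset α) : Finset α → ℝ := pushforward (· ∩ W) w

variable {w : Finset α → ℝ} {V W : Finset α}

lemma marginal_marginal {W' : Finset α} (h : W' ⊆ W) :
    marginal (marginal w W) W' = marginal w W' := by
  rw [marginal, marginal, pushforward_pushforward, marginal]
  congr 1
  ext S : 1
  simp [inter_assoc, inter_eq_right.2 h]

lemma le_marginal (hw : 0 ≤ w) (S : Finset α) : w S ≤ marginal w W (S ∩ W) :=
  le_pushforward hw S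

lemma marginal_eq_zero_of_not_subset (w : Finset α → ℝ) {K : Finset α} (hK : ¬ K ⊆ W) :
    marginal w W K = 0 :=
  sum_eq_zero fun _ hS => absurd ((mem_filter.1 hS).2 ▸ inter_subset_right) hK

structure IsDistOn (V : Finset α) (w : Finset α → ℝ) : Prop where
  nonneg : 0 ≤ w
  subset_of_ne_zero : ∀ S, w S ≠ 0 → S ⊆ V
  sum_eq_one : ∑ S, w S = 1

lemma IsDistOn.marginal_self (hw : IsDistOn V w) : marginal w V = w := by
  rw [marginal, pushforward_congr (φ := (· ∩ V)) (φ' := id)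
    fun S hS => inter_eq_left.2 (hw.subset_of_ne_zero S hS), pushforward_id]

lemma isDistOn_single {A : Finset α} (hA : A ⊆ V) : IsDistOn V (Pi.single A 1) where
  nonneg S := by by_cases h : S = A <;> simp [h]
  subset_of_ne_zero S hS := by
    by_cases h : S = A
    · exact h ▸ hA
    · simp [h] at hS
  sum_eq_one := by simp

lemma marginal_single (A W : Finset α) :
    marginal (Pi.single A 1) W = Pi.single (A ∩ W) 1 :=
  pushforward_single A

/-- The coupling of `w₁` and `w₂` that is conditionally independent given the common marginal on
`I`. Where that marginal vanishes so does `w₁`, so the junk value of division by zero is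
harmless. -/
noncomputable def coupling (w₁ w₂ : Finset α → ℝ) (I : Finset α) (S : Finset α × Finset α) : ℝ :=
  if S.1 ∩ I = S.2 ∩ I then w₁ S.1 * w₂ S.2 / marginal w₁ I (S.1 ∩ I) else 0

variable {w₁ w₂ : Finset α → ℝ} {I : Finset α}

lemma coupling_swap (h : marginal w₁ I = marginal w₂ I) (S : Finset α × Finset α) :
    coupling w₂ w₁ I S.swap = coupling w₁ w₂ I S := by
  simp only [coupling, Prod.fst_swap, Prod.snd_swap]
  split_ifs with h₁ h₂ h₂
  · rw [← h, h₂, mul_comm]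
  · exact absurd h₁.symm h₂
  · exact absurd h₂.symm h₁
  · rfl

lemma pushforward_fst_coupling (hw₁ : 0 ≤ w₁) (h : marginal w₁ I = marginal w₂ I) :
    pushforward Prod.fst (coupling w₁ w₂ I) = w₁ := by
  ext S₁
  set μ := marginal w₁ I (S₁ ∩ I)
  have hμ : ∑ S₂ with S₂ ∩ I = S₁ ∩ I, w₂ S₂ = μ := by simp only [μ, h]; rfl
  calc pushforward Prod.fst (coupling w₁ w₂ I) S₁
      = ∑ S₂ with S₂ ∩ I = S₁ ∩ I, w₂ S₂ * (w₁ S₁ / μ) := by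
        rw [pushforward_fst, sum_filter]
        refine sum_congr rfl fun S₂ _ => ?_
        simp only [coupling, eq_comm (a := S₁ ∩ I)]
        split_ifs <;> ring
    _ = w₁ S₁ := by
        rw [← sum_mul, hμ]
        by_cases hμ0 : μ = 0
        · have hw0 : w₁ S₁ = 0 := le_antisymm (hμ0 ▸ le_marginal hw₁ S₁) (hw₁ S₁)
          simp [hμ0, hw0]
        · field_simp

lemma pushforward_snd_coupling (hw₂ : 0 ≤ w₂) (h : marginal w₁ I = marginal w₂ I) :
    pushforward Prod.snd (coupling w₁ w₂ I) = w₂ := by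
  ext S₂
  calc pushforward Prod.snd (coupling w₁ w₂ I) S₂
      = ∑ S₁, coupling w₂ w₁ I (S₂, S₁) := by
        rw [pushforward_snd]
        exact sum_congr rfl fun S₁ _ => (coupling_swap h (S₁, S₂)).symm
    _ = w₂ S₂ := by rw [← pushforward_fst, pushforward_fst_coupling hw₂ h.symm]

theorem IsDistOn.exists_glue {V₁ V₂ : Finset α} (h₁ : IsDistOn V₁ w₁) (h₂ : IsDistOn V₂ w₂)
    (h : marginal w₁ (V₁ ∩ V₂) = marginal w₂ (V₁ ∩ V₂)) :
    ∃ w, IsDistOn (V₁ ∪ V₂) w ∧ marginal w V₁ = w₁ ∧ marginal w V₂ = w₂ := by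
  set c := coupling w₁ w₂ (V₁ ∩ V₂)
  have hc : ∀ S, c S ≠ 0 → (S.1 ∪ S.2) ∩ V₁ = S.1 ∧ (S.1 ∪ S.2) ∩ V₂ = S.2 := by
    intro S hS
    simp only [c, coupling] at hS
    split_ifs at hS with hI
    · obtain ⟨hS₁, hS₂⟩ := mul_ne_zero_iff.1 (div_ne_zero_iff.1 hS).1
      have hV₁ := h₁.subset_of_ne_zero _ hS₁
      have hV₂ := h₂.subset_of_ne_zero _ hS₂
      simp only [Finset.ext_iff, subset_iff, mem_inter, mem_union] at hI hV₁ hV₂ ⊢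
      grind
    · exact absurd rfl hS
  have hc0 : 0 ≤ c := fun S => by
    simp only [c, coupling]
    split_ifs
    · exact div_nonneg (mul_nonneg (h₁.nonneg _) (h₂.nonneg _)) (pushforward_nonneg h₁.nonneg _)
    · exact le_rfl
  refine ⟨pushforward (fun S => S.1 ∪ S.2) c, ⟨pushforward_nonneg hc0, fun X hX => ?_, ?_⟩, ?_, ?_⟩
  · obtain ⟨S, rfl, hS⟩ := exists_of_pushforward_ne_zero hX
    rw [← (hc S hS).1, ← (hc S hS).2]
    exact union_subset_union inter_subset_right inter_subset_right
  · rw [sum_pushforward, ← sum_pushforward (φ := Prod.fst),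
      pushforward_fst_coupling h₁.nonneg h, h₁.sum_eq_one]
  · rw [marginal, pushforward_pushforward]
    exact (pushforward_congr fun S hS => (hc S hS).1).trans (pushforward_fst_coupling h₁.nonneg h)
  · rw [marginal, pushforward_pushforward]
    exact (pushforward_congr fun S hS => (hc S hS).2).trans (pushforward_snd_coupling h₂.nonneg h)

end Marginal

lemma sum_smul_mem_convexHull {ι E : Type*} [Fintype ι] [AddCommGroup E] [Module ℝ E]
    {s : Set E} {w : ι → ℝ} {z : ι → E} (h₀ : 0 ≤ w) (h₁ : ∑ i, w i = 1)
    (hz : ∀ i, w i ≠ 0 → z i ∈ s) : ∑ i, w i • z i ∈ convexHull ℝ s := by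
  rw [← sum_filter_ne_zero] at h₁
  rw [← sum_filter_of_ne (p := fun i => w i ≠ 0) fun i _ h hi => h (by simp [hi])]
  exact (convex_convexHull ℝ s).sum_mem (fun i _ => h₀ i) h₁
    fun i hi => subset_convexHull ℝ s (hz i (mem_filter.1 hi).2)

section StandardForm

variable {κ ρ M : Type*} [AddCommGroup M] [Module ℝ M]

def standardPolyhedron (s : Finset κ) (E : (κ → ℝ) →ₗ[ℝ] (ρ → ℝ)) (d : ρ → ℝ) :
    Set (κ → ℝ) :=
  {F | (∀ k ∉ s, F k = 0) ∧ 0 ≤ F ∧ E F = d}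

lemma convex_standardPolyhedron (s : Finset κ) (E : (κ → ℝ) →ₗ[ℝ] (ρ → ℝ)) (d : ρ → ℝ) :
    Convex ℝ (standardPolyhedron s E d) := by
  rintro F ⟨hs, h0, hE⟩ F' ⟨hs', h0', hE'⟩ a b ha hb hab
  refine ⟨fun k hk => by simp [hs k hk, hs' k hk], ?_, ?_⟩
  · exact add_nonneg (smul_nonneg ha h0) (smul_nonneg hb h0')
  · rw [map_add, map_smul, map_smul, hE, hE', ← add_smul, hab, one_smul]

theorem exists_matrix_image_eq [Fintype ρ] (s : Finset κ) (E : (κ → ℝ) →ₗ[ℝ] (ρ → ℝ))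
    (d : ρ → ℝ) (L : (κ → ℝ) →ₗ[ℝ] M) :
    ∃ (A : Matrix (Fin #s) (Fin #s) ℝ) (b : Fin #s → ℝ)
      (C : Matrix (Fin (Fintype.card ρ)) (Fin #s) ℝ) (d' : Fin (Fintype.card ρ) → ℝ)
      (π : (Fin #s → ℝ) →ₗ[ℝ] M),
      π '' {x | A.mulVec x ≤ b ∧ C.mulVec x = d'} = L '' standardPolyhedron s E d := by
  classical
  let e : Fin #s → κ := fun i => s.equivFin.symm i
  have he : Function.Injective e := Subtype.val_injective.comp s.equivFin.symm.injective
  have he_mem : ∀ k, (∃ i, e i = k) ↔ k ∈ s := fun k =>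
    ⟨fun ⟨i, hi⟩ => hi ▸ (s.equivFin.symm i).2, fun hk => ⟨s.equivFin ⟨k, hk⟩, by simp [e]⟩⟩
  let ι := Function.ExtendByZero.linearMap ℝ e
  let r := Fintype.equivFin ρ
  refine ⟨-1, 0, LinearMap.toMatrix' (LinearMap.funLeft ℝ ℝ r.symm ∘ₗ E ∘ₗ ι), d ∘ r.symm,
    L ∘ₗ ι, ?_⟩
  rw [LinearMap.coe_comp, Set.image_comp]
  congr 1
  ext F
  simp only [Set.mem_image, Set.mem_ofPred_eq, Matrix.neg_mulVec, Matrix.one_mulVec, neg_nonpos,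
    LinearMap.toMatrix'_mulVec, standardPolyhedron]
  constructor
  · rintro ⟨x, ⟨hx0, hxE⟩, rfl⟩
    refine ⟨fun k hk => ?_, fun k => ?_, funext fun j => ?_⟩
    · simp [ι, Function.extend_apply' _ _ _ (mt (he_mem k).1 hk)]
    · by_cases hk : ∃ i, e i = k
      · obtain ⟨i, rfl⟩ := hk
        simpa [ι, he.extend_apply] using hx0 i
      · simp [ι, Function.extend_apply' _ _ _ hk]
    · simpa [r] using congrFun hxE (r j)
  · rintro ⟨hs, h0, hE⟩
    have hF : ι (F ∘ e) = F := by
      ext k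
      by_cases hk : k ∈ s
      · obtain ⟨i, rfl⟩ := (he_mem k).2 hk
        simp [ι, he.extend_apply]
      · simp [ι, Function.extend_apply' _ _ _ (mt (he_mem k).1 hk), hs k hk]
    refine ⟨F ∘ e, ⟨fun i => h0 _, ?_⟩, hF⟩
    rw [LinearMap.comp_apply, LinearMap.comp_apply, hF, hE]
    rfl

end StandardForm

namespace NiceTree

def bags : NiceTree n → Finset (Finset (Fin n))
  | leaf v => {{v}}
  | introduce v t => insert (insert v t.bag) t.bags
  | forget v t => insert (t.bag.erase v) t.bags
  | join t₁ t₂ => t₁.bags ∪ t₂.bags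

/-- Larger bag first; join nodes contribute no pair, since their bag equals both children's. -/
def edges : NiceTree n → Finset (Finset (Fin n) × Finset (Fin n))
  | leaf _ => ∅
  | introduce v t => insert (insert v t.bag, t.bag) t.edges
  | forget v t => insert (t.bag, t.bag.erase v) t.edges
  | join t₁ t₂ => t₁.edges ∪ t₂.edges

lemma isSubtree_refl (t : NiceTree n) : t.isSubtree t := by
  cases t <;> simp [isSubtree]

lemma mem_bags {t : NiceTree n} {W : Finset (Fin n)} :
    W ∈ t.bags ↔ ∃ s : NiceTree n, s.isSubtree t ∧ s.bag = W := by
  induction t with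
  | leaf v => simp [bags, isSubtree, bag, eq_comm]
  | introduce v t ih => simp [bags, isSubtree, bag, ih, or_and_right, exists_or, eq_comm]
  | forget v t ih => simp [bags, isSubtree, bag, ih, or_and_right, exists_or, eq_comm]
  | join t₁ t₂ ih₁ ih₂ =>
    simp only [bags, isSubtree, mem_union, ih₁, ih₂, or_and_right, exists_or, exists_eq_left, bag]
    constructor
    · rintro (h | h) <;> simp [h]
    · rintro (rfl | h | h)
      · exact Or.inl ⟨t₁, isSubtree_refl t₁, rfl⟩
      · exact Or.inl h
      · exact Or.inr h

lemma bag_mem_bags (t : NiceTree n) : t.bag ∈ t.bags :=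
  mem_bags.2 ⟨t, isSubtree_refl t, rfl⟩

lemma card_bags_le (t : NiceTree n) : #t.bags ≤ t.size := by
  induction t with
  | leaf v => simp [bags, size]
  | introduce v t ih | forget v t ih => exact (card_insert_le _ _).trans (by simp [size, ih])
  | join t₁ t₂ ih₁ ih₂ => exact (card_union_le _ _).trans (by simp only [size]; omega)

lemma card_edges_le (t : NiceTree n) : #t.edges ≤ t.size := by
  induction t with
  | leaf v => simp [edges, size]
  | introduce v t ih | forget v t ih => exact (card_insert_le _ _).trans (by simp [size, ih])
  | join t₁ t₂ ih₁ ih₂ => exact (card_union_le _ _).trans (by simp only [size]; omega)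

lemma bag_subset_verts (t : NiceTree n) : t.bag ⊆ t.verts := by
  induction t with
  | leaf v => simp [bag, verts]
  | introduce v t ih => exact insert_subset_insert v ih
  | forget v t ih => exact (erase_subset v _).trans ih
  | join t₁ t₂ ih₁ ih₂ => exact ih₁.trans subset_union_left

lemma subset_verts_of_mem_bags {t : NiceTree n} {W : Finset (Fin n)} (h : W ∈ t.bags) :
    W ⊆ t.verts := by
  induction t with
  | leaf v => simp_all [bags, verts]
  | introduce v t ih =>
    rcases mem_insert.1 h with rfl | h
    · exact insert_subset_insert v t.bag_subset_verts
    · exact (ih h).trans (subset_insert v _)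
  | forget v t ih =>
    rcases mem_insert.1 h with rfl | h
    · exact (erase_subset v _).trans t.bag_subset_verts
    · exact ih h
  | join t₁ t₂ ih₁ ih₂ =>
    rcases mem_union.1 h with h | h
    · exact (ih₁ h).trans subset_union_left
    · exact (ih₂ h).trans subset_union_right

lemma exists_mem_bags_of_mem_verts {t : NiceTree n} {v : Fin n} (h : v ∈ t.verts) :
    ∃ W ∈ t.bags, v ∈ W := by
  induction t with
  | leaf w => exact ⟨{w}, by simp [bags], h⟩
  | introduce w t ih =>
    rcases mem_insert.1 h with rfl | h
    · exact ⟨_, mem_insert_self _ _, mem_insert_self _ _⟩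
    · obtain ⟨W, hW, hv⟩ := ih h
      exact ⟨W, mem_insert_of_mem hW, hv⟩
  | forget w t ih =>
    obtain ⟨W, hW, hv⟩ := ih h
    exact ⟨W, mem_insert_of_mem hW, hv⟩
  | join t₁ t₂ ih₁ ih₂ =>
    rcases mem_union.1 h with h | h
    · obtain ⟨W, hW, hv⟩ := ih₁ h
      exact ⟨W, mem_union_left _ hW, hv⟩
    · obtain ⟨W, hW, hv⟩ := ih₂ h
      exact ⟨W, mem_union_right _ hW, hv⟩

lemma mem_bags_of_mem_edges {t : NiceTree n} {e : Finset (Fin n) × Finset (Fin n)}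
    (h : e ∈ t.edges) : e.1 ∈ t.bags ∧ e.2 ∈ t.bags ∧ e.2 ⊆ e.1 := by
  induction t with
  | leaf v => simp [edges] at h
  | introduce v t ih =>
    rcases mem_insert.1 h with rfl | h
    · exact ⟨mem_insert_self _ _, mem_insert_of_mem t.bag_mem_bags, subset_insert v _⟩
    · obtain ⟨h₁, h₂, h₃⟩ := ih h
      exact ⟨mem_insert_of_mem h₁, mem_insert_of_mem h₂, h₃⟩
  | forget v t ih =>
    rcases mem_insert.1 h with rfl | h
    · exact ⟨mem_insert_of_mem t.bag_mem_bags, mem_insert_self _ _, erase_subset v _⟩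
    · obtain ⟨h₁, h₂, h₃⟩ := ih h
      exact ⟨mem_insert_of_mem h₁, mem_insert_of_mem h₂, h₃⟩
  | join t₁ t₂ ih₁ ih₂ =>
    rcases mem_union.1 h with h | h
    · obtain ⟨h₁, h₂, h₃⟩ := ih₁ h
      exact ⟨mem_union_left _ h₁, mem_union_left _ h₂, h₃⟩
    · obtain ⟨h₁, h₂, h₃⟩ := ih₂ h
      exact ⟨mem_union_right _ h₁, mem_union_right _ h₂, h₃⟩

structure IsLocallyConsistent (t : NiceTree n) (f : Finset (Fin n) → Finset (Fin n) → ℝ) :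
    Prop where
  isDistOn : ∀ W ∈ t.bags, IsDistOn W (f W)
  marginal_eq : ∀ e ∈ t.edges, marginal (f e.1) e.2 = f e.2

variable {f : Finset (Fin n) → Finset (Fin n) → ℝ}

lemma IsLocallyConsistent.mono {s t : NiceTree n} (h : t.IsLocallyConsistent f)
    (hb : s.bags ⊆ t.bags) (he : s.edges ⊆ t.edges) : s.IsLocallyConsistent f :=
  ⟨fun W hW => h.isDistOn W (hb hW), fun e he' => h.marginal_eq e (he he')⟩

theorem IsLocallyConsistent.exists_isDistOn {t : NiceTree n} (ht : t.valid)
    (h : t.IsLocallyConsistent f) :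
    ∃ w, IsDistOn t.verts w ∧ ∀ W ∈ t.bags, marginal w W = f W := by
  induction t with
  | leaf v =>
    have hv := h.isDistOn {v} (mem_singleton_self _)
    exact ⟨f {v}, hv, by simpa [bags] using hv.marginal_self⟩
  | introduce v t ih =>
    obtain ⟨w', hw', hmarg⟩ := ih ht.2 (h.mono (subset_insert _ _) (subset_insert _ _))
    have hB := h.isDistOn _ (mem_insert_self _ _)
    have hedge := h.marginal_eq _ (mem_insert_self _ _)
    have hI : t.verts ∩ insert v t.bag = t.bag := by
      rw [inter_insert_of_notMem ht.1, inter_eq_right.2 t.bag_subset_verts]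
    obtain ⟨w, hw, h₁, h₂⟩ := hw'.exists_glue hB (by rw [hI, hmarg _ t.bag_mem_bags, hedge])
    refine ⟨w, ?_, fun W hW => ?_⟩
    · rwa [union_insert, union_eq_left.2 t.bag_subset_verts] at hw
    rcases mem_insert.1 hW with rfl | hW
    · exact h₂
    · rw [← marginal_marginal (subset_verts_of_mem_bags hW), h₁, hmarg W hW]
  | forget v t ih =>
    obtain ⟨w, hw, hmarg⟩ := ih ht.2 (h.mono (subset_insert _ _) (subset_insert _ _))
    refine ⟨w, hw, fun W hW => ?_⟩
    rcases mem_insert.1 hW with rfl | hW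
    · rw [← marginal_marginal (erase_subset v t.bag), hmarg _ t.bag_mem_bags]
      exact h.marginal_eq _ (mem_insert_self _ _)
    · exact hmarg W hW
  | join t₁ t₂ ih₁ ih₂ =>
    obtain ⟨hbag, hcap, ht₁, ht₂⟩ := ht
    obtain ⟨w₁, hw₁, hmarg₁⟩ := ih₁ ht₁ (h.mono subset_union_left subset_union_left)
    obtain ⟨w₂, hw₂, hmarg₂⟩ := ih₂ ht₂ (h.mono subset_union_right subset_union_right)
    have hI : t₁.verts ∩ t₂.verts = t₁.bag :=
      hcap.antisymm (subset_inter t₁.bag_subset_verts (hbag ▸ t₂.bag_subset_verts))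
    obtain ⟨w, hw, h₁, h₂⟩ := hw₁.exists_glue hw₂ (by
      rw [hI, hmarg₁ _ t₁.bag_mem_bags, hbag, hmarg₂ _ t₂.bag_mem_bags])
    refine ⟨w, hw, fun W hW => ?_⟩
    rcases mem_union.1 hW with hW | hW
    · rw [← marginal_marginal (subset_verts_of_mem_bags hW), h₁, hmarg₁ W hW]
    · rw [← marginal_marginal (subset_verts_of_mem_bags hW), h₂, hmarg₂ W hW]

end NiceTree

def indepSetVectors (G : SimpleGraph (Fin n)) : Set (Fin n → ℝ) :=
  {x | ∃ S : Finset (Fin n), (∀ u ∈ S, ∀ v ∈ S, ¬ G.Adj u v) ∧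
    x = fun v => if v ∈ S then (1 : ℝ) else 0}

namespace NiceTree

variable (G : SimpleGraph (Fin n)) (T : NiceTree n)

open Classical in
noncomputable def indepConfigs : Finset (Finset (Fin n) × Finset (Fin n)) :=
  {p ∈ T.bags ×ˢ univ | p.2 ⊆ p.1 ∧ ∀ u ∈ p.2, ∀ v ∈ p.2, ¬ G.Adj u v}

variable {G T} in
lemma mem_indepConfigs {p : Finset (Fin n) × Finset (Fin n)} :
    p ∈ T.indepConfigs G ↔ p.1 ∈ T.bags ∧ p.2 ⊆ p.1 ∧ ∀ u ∈ p.2, ∀ v ∈ p.2, ¬ G.Adj u v := by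
  simp [indepConfigs]

/-- One equation per bag (total mass one), and one per edge `(W, W')` and `K' ⊆ W'`
(marginal consistency). -/
abbrev Row := T.bags ⊕ Σ e : T.edges, e.1.2.powerset

noncomputable def constraintMap :
    (Finset (Fin n) × Finset (Fin n) → ℝ) →ₗ[ℝ] (T.Row → ℝ) :=
  LinearMap.pi <| Sum.elim (fun W => ∑ K, LinearMap.proj (W.1, K)) fun r =>
    (∑ K with K ∩ r.1.1.2 = r.2, LinearMap.proj (r.1.1.1, K)) - LinearMap.proj (r.1.1.2, r.2.1)

def constraintRhs : T.Row → ℝ := Sum.elim 1 0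

def lpPolyhedron : Set (Finset (Fin n) × Finset (Fin n) → ℝ) :=
  standardPolyhedron (T.indepConfigs G) T.constraintMap T.constraintRhs

variable {T} in
noncomputable def readout (B : Fin n → Finset (Fin n)) :
    (Finset (Fin n) × Finset (Fin n) → ℝ) →ₗ[ℝ] (Fin n → ℝ) :=
  LinearMap.pi fun v => ∑ K with v ∈ K, LinearMap.proj (B v, K)

lemma readout_apply (B : Fin n → Finset (Fin n)) (F : Finset (Fin n) × Finset (Fin n) → ℝ)
    (v : Fin n) : readout B F v = ∑ K with v ∈ K, F (B v, K) := by
  simp [readout]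

lemma constraintMap_inl (F : Finset (Fin n) × Finset (Fin n) → ℝ) (W : T.bags) :
    T.constraintMap F (.inl W) = ∑ K, F (W, K) := by
  simp [constraintMap]

lemma constraintMap_inr (F : Finset (Fin n) × Finset (Fin n) → ℝ)
    (r : Σ e : T.edges, e.1.2.powerset) :
    T.constraintMap F (.inr r) =
      marginal (Function.curry F r.1.1.1) r.1.1.2 r.2 - F (r.1.1.2, r.2) := by
  simp [constraintMap, marginal, pushforward]

variable {G T}
variable {F : Finset (Fin n) × Finset (Fin n) → ℝ}

lemma mem_lpPolyhedron_iff :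
    F ∈ T.lpPolyhedron G ↔
      (∀ p ∉ T.indepConfigs G, F p = 0) ∧ T.IsLocallyConsistent (Function.curry F) := by
  refine and_congr_right fun hF => ⟨?_, fun h => ?_⟩
  · rintro ⟨hnonneg, hrows⟩
    refine ⟨fun W hW => ⟨fun K => hnonneg _, fun K hK => ?_, ?_⟩, fun e he => ?_⟩
    · exact (mem_indepConfigs.1 (not_imp_comm.1 (hF _) hK)).2.1
    · simpa [constraintMap_inl, constraintRhs] using congrFun hrows (.inl ⟨W, hW⟩)
    ext K
    by_cases hK : K ⊆ e.2
    · have := congrFun hrows (.inr ⟨⟨e, he⟩, ⟨K, mem_powerset.2 hK⟩⟩)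
      rw [constraintMap_inr] at this
      exact sub_eq_zero.1 this
    · rw [marginal_eq_zero_of_not_subset _ hK, Function.curry_apply,
        hF _ fun h => hK (mem_indepConfigs.1 h).2.1]
  refine ⟨fun p => ?_, funext fun r => ?_⟩
  · by_cases hp : p ∈ T.indepConfigs G
    · exact (h.isDistOn _ (mem_indepConfigs.1 hp).1).nonneg p.2
    · simp [hF p hp]
  rcases r with ⟨W, hW⟩ | ⟨⟨e, he⟩, K, hK⟩
  · simpa [constraintMap_inl, constraintRhs] using (h.isDistOn W hW).sum_eq_one
  · rw [constraintMap_inr]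
    exact sub_eq_zero.2 (congrFun (h.marginal_eq e he) K)

variable {B : Fin n → Finset (Fin n)}

lemma readout_mem_convexHull (hdec : IsNiceTreeDecompGraph G T)
    (hB : ∀ v, B v ∈ T.bags ∧ v ∈ B v) (hF : F ∈ T.lpPolyhedron G) :
    readout B F ∈ convexHull ℝ (indepSetVectors G) := by
  obtain ⟨hsupp, h⟩ := mem_lpPolyhedron_iff.1 hF
  obtain ⟨w, hw, hmarg⟩ := h.exists_isDistOn hdec.1
  have hindep : ∀ S, w S ≠ 0 → ∀ u ∈ S, ∀ v ∈ S, ¬ G.Adj u v := by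
    intro S hS u hu v hv huv
    obtain ⟨s, hs, hus, hvs⟩ := hdec.2.2 u v huv
    have hW : s.bag ∈ T.bags := mem_bags.2 ⟨s, hs, rfl⟩
    have hne : F (s.bag, S ∩ s.bag) ≠ 0 := by
      rw [← Function.curry_apply F, ← hmarg _ hW]
      exact pushforward_ne_zero hw.nonneg hS
    exact (mem_indepConfigs.1 (not_imp_comm.1 (hsupp _) hne)).2.2 u (mem_inter.2 ⟨hu, hus⟩)
      v (mem_inter.2 ⟨hv, hvs⟩) huv
  have hsum : readout B F = ∑ S, w S • fun v => if v ∈ S then (1 : ℝ) else 0 := by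
    ext v
    calc readout B F v = ∑ K with v ∈ K, marginal w (B v) K := by
          simp [readout_apply, hmarg _ (hB v).1]
      _ = ∑ S with v ∈ S ∩ B v, w S := sum_filter_pushforward _
      _ = _ := by simp [sum_filter, (hB v).2]
  rw [hsum]
  exact sum_smul_mem_convexHull hw.nonneg hw.sum_eq_one fun S hS => ⟨S, hindep S hS, rfl⟩

lemma indicator_mem_image_readout (hB : ∀ v, B v ∈ T.bags ∧ v ∈ B v) {S : Finset (Fin n)}
    (hS : ∀ u ∈ S, ∀ v ∈ S, ¬ G.Adj u v) :
    (fun v => if v ∈ S then (1 : ℝ) else 0) ∈ readout B '' T.lpPolyhedron G := by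
  classical
  let F : Finset (Fin n) × Finset (Fin n) → ℝ := fun p =>
    if p.1 ∈ T.bags ∧ p.2 = S ∩ p.1 then 1 else 0
  have hF : ∀ W ∈ T.bags, Function.curry F W = Pi.single (S ∩ W) 1 := by
    intro W hW
    ext K
    simp [F, Pi.single_apply, hW]
  refine ⟨F, mem_lpPolyhedron_iff.2 ⟨fun p hp => ?_, fun W hW => ?_, fun e he => ?_⟩, ?_⟩
  · refine if_neg fun ⟨h₁, h₂⟩ => hp (mem_indepConfigs.2 ⟨h₁, h₂ ▸ inter_subset_right, ?_⟩)
    rw [h₂]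
    exact fun u hu v hv => hS u (mem_inter.1 hu).1 v (mem_inter.1 hv).1
  · rw [hF W hW]
    exact isDistOn_single inter_subset_right
  · obtain ⟨h₁, h₂, h₃⟩ := mem_bags_of_mem_edges he
    rw [hF _ h₁, hF _ h₂, marginal_single, inter_assoc, inter_eq_right.2 h₃]
  · ext v
    simp [readout_apply, F, (hB v).1, (hB v).2]

theorem readout_image_lpPolyhedron (hdec : IsNiceTreeDecompGraph G T)
    (hB : ∀ v, B v ∈ T.bags ∧ v ∈ B v) :
    readout B '' T.lpPolyhedron G = convexHull ℝ (indepSetVectors G) := by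
  refine subset_antisymm (Set.image_subset_iff.2 fun F hF => readout_mem_convexHull hdec hB hF)
    (convexHull_min ?_ ((convex_standardPolyhedron _ _ _).linear_image _))
  rintro _ ⟨S, hS, rfl⟩
  exact indicator_mem_image_readout hB hS

variable {k : ℕ}

lemma card_indepConfigs_le (h : ∀ W ∈ T.bags, #W ≤ k) : #(T.indepConfigs G) ≤ 2 ^ k * T.size :=
  calc #(T.indepConfigs G) ≤ #(T.bags.biUnion fun W => {W} ×ˢ W.powerset) := by
        refine card_le_card fun p hp => ?_
        obtain ⟨h₁, h₂, -⟩ := mem_indepConfigs.1 hp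
        exact mem_biUnion.2 ⟨p.1, h₁, mem_product.2 ⟨mem_singleton_self _, mem_powerset.2 h₂⟩⟩
    _ ≤ ∑ W ∈ T.bags, 2 ^ k := card_biUnion_le.trans <| sum_le_sum fun W hW => by
        simpa using pow_le_pow_right₀ one_le_two (h W hW)
    _ ≤ 2 ^ k * T.size := by
        rw [sum_const, smul_eq_mul, mul_comm]
        exact Nat.mul_le_mul_left _ T.card_bags_le

lemma card_row_le (h : ∀ W ∈ T.bags, #W ≤ k) : Fintype.card T.Row ≤ (2 ^ k + 1) * T.size := by
  have hedges : ∑ e : T.edges, #e.1.2.powerset ≤ 2 ^ k * T.size :=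
    calc ∑ e : T.edges, #e.1.2.powerset ≤ ∑ _e : T.edges, 2 ^ k := sum_le_sum fun e _ => by
          simpa using pow_le_pow_right₀ one_le_two (h _ (mem_bags_of_mem_edges e.2).2.1)
      _ ≤ 2 ^ k * T.size := by
          rw [sum_const, card_univ, Fintype.card_coe, smul_eq_mul, mul_comm]
          exact Nat.mul_le_mul_left _ T.card_edges_le
  simp only [Row, Fintype.card_sum, Fintype.card_coe, Fintype.card_sigma]
  linarith [T.card_bags_le]

end NiceTree

/-- Extended formulation of size `O(2^(τ+1)·N)` for the
independent set polytope of a graph of treewidth `τ`. -/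
theorem independent_set_extended_formulation :
    ∃ c : ℕ, 0 < c ∧
      ∀ (n : ℕ) (G : SimpleGraph (Fin n)) (T : NiceTree n) (τ : ℕ),
        IsNiceTreeDecompGraph G T →
        (∀ s : NiceTree n, s.isSubtree T → s.bag.card ≤ τ + 1) →
        ∃ (m p q : ℕ) (A : Matrix (Fin p) (Fin m) ℝ) (bvec : Fin p → ℝ)
          (Cmat : Matrix (Fin q) (Fin m) ℝ) (dvec : Fin q → ℝ)
          (π : (Fin m → ℝ) →ₗ[ℝ] (Fin n → ℝ)),
          m ≤ c * 2 ^ (τ + 1) * T.size ∧ p + q ≤ c * 2 ^ (τ + 1) * T.size ∧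
          π '' {x | A.mulVec x ≤ bvec ∧ Cmat.mulVec x = dvec}
            = convexHull ℝ {x : Fin n → ℝ | ∃ S : Finset (Fin n),
                (∀ u ∈ S, ∀ v ∈ S, ¬ G.Adj u v) ∧
                x = fun v => if v ∈ S then (1 : ℝ) else 0} := by
  refine ⟨3, by norm_num, fun n G T τ hdec hbags => ?_⟩
  have hcard : ∀ W ∈ T.bags, #W ≤ τ + 1 := fun W hW => by
    obtain ⟨s, hs, rfl⟩ := NiceTree.mem_bags.1 hW
    exact hbags s hs
  choose B hB using fun v => T.exists_mem_bags_of_mem_verts (hdec.2.1 v)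
  obtain ⟨A, b, C, d, π, hπ⟩ := exists_matrix_image_eq (T.indepConfigs G) T.constraintMap
    T.constraintRhs (NiceTree.readout B)
  have h₁ := T.card_indepConfigs_le (G := G) hcard
  have h₂ := T.card_row_le hcard
  have h₃ : T.size ≤ 2 ^ (τ + 1) * T.size := Nat.le_mul_of_pos_left _ (by positivity)
  exact ⟨_, _, _, A, b, C, d, π, by linarith, by linarith,
    hπ.trans (NiceTree.readout_image_lpPolyhedron hdec hB)⟩
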